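/- arXiv:2409.01828 — 5 statements merged into one kernel-verified Lean document; each statement's English description precedes it below -/
import Mathlib

section
/- Let K be a field, and let T and S be K-linear triangulated categories admitting Serre functors S_T and S_S respectively. If F : T ⇄ S : G is an adjoint pair of K-linear triangulated functors, then G has a right adjoint, namely S_S ∘ F ∘ S_T^{-1}, and dually F has a left adjoint, namely S_T^{-1} ∘ G ∘ S_S. -/
open CategoryTheory Limits Pretriangulated

universe v u

structure SerreFunctor (K : Type*) [Field K] (T : Type u) [Category.{v} T]
    [Preadditive T] [Linear K T] [HasShift T ℤ]
    [∀ n : ℤ, (shiftFunctor T n).Additive] where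
  Ser : T ⥤ T
  inv : T ⥤ T
  serAdditive : Ser.Additive
  serLinear : Ser.Linear K
  counitIso : Ser ⋙ inv ≅ 𝟭 T
  unitIso : 𝟭 T ≅ inv ⋙ Ser
  φ : ∀ B C : T, (B ⟶ C) ≃ₗ[K] Module.Dual K (C ⟶ Ser.obj B)
  nat_left : ∀ {B' B C : T} (f : B' ⟶ B) (h : B ⟶ C) (t : C ⟶ Ser.obj B'),
    φ B' C (f ≫ h) t = φ B C h (t ≫ Ser.map f)
  nat_right : ∀ {B C C' : T} (h : B ⟶ C) (g : C ⟶ C') (t : C' ⟶ Ser.obj B),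
    φ B C' (h ≫ g) t = φ B C h (g ≫ t)

section Helpers

variable {K : Type*} [Field K]

/-- Postcomposition with an isomorphism as a linear equivalence. -/
def homPostEquiv {C : Type*} [Category C] [Preadditive C] [Linear K C]
    (A : C) {B B' : C} (i : B ≅ B') : (A ⟶ B) ≃ₗ[K] (A ⟶ B') where
  toFun f := f ≫ i.hom
  map_add' f g := by simp
  map_smul' r f := by simp
  invFun f := f ≫ i.inv
  left_inv f := by simp
  right_inv f := by simp

/-- A fully faithful linear functor induces a linear equivalence on hom spaces. -/
def mapLE {C D : Type*} [Category C] [Category D] [Preadditive C] [Linear K C]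
    [Preadditive D] [Linear K D] (E : C ⥤ D) (hAdd : E.Additive) (hLin : E.Linear K)
    (ff : E.FullyFaithful) (A B : C) : (A ⟶ B) ≃ₗ[K] (E.obj A ⟶ E.obj B) :=
  letI := hAdd
  letI := hLin
  { toFun := E.map
    map_add' := fun f g => E.map_add
    map_smul' := fun r f => E.map_smul r f
    invFun := ff.preimage
    left_inv := fun f => ff.preimage_map f
    right_inv := fun f => ff.map_preimage f }

variable {T : Type u} [Category.{v} T] [Preadditive T] [Linear K T]
  [HasShift T ℤ] [∀ n : ℤ, (shiftFunctor T n).Additive]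
variable {S : Type u} [Category.{v} S] [Preadditive S] [Linear K S]
  [HasShift S ℤ] [∀ n : ℤ, (shiftFunctor S n).Additive]

/-- The Serre functor, as an equivalence of categories. -/
def SerreFunctor.equiv (ST : SerreFunctor K T) : T ≌ T :=
  CategoryTheory.Equivalence.mk ST.Ser ST.inv ST.counitIso.symm ST.unitIso.symm

/-- The Serre functor is fully faithful. -/
def SerreFunctor.ffSer (ST : SerreFunctor K T) : ST.Ser.FullyFaithful :=
  ST.equiv.fullyFaithfulFunctor

variable (ST : SerreFunctor K T) (SS : SerreFunctor K S)
variable (F : T ⥤ S) (G : S ⥤ T) (adj : F ⊣ G)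
variable [F.Additive] [F.Linear K] [G.Additive] [G.Linear K]

/-- The adjunction hom-equiv as a linear equivalence. -/
def adjLE (A : T) (Y : S) : (F.obj A ⟶ Y) ≃ₗ[K] (A ⟶ G.obj Y) where
  toFun := adj.homEquiv A Y
  map_add' f g := by simp [Adjunction.homEquiv_unit]
  map_smul' r f := by simp [Adjunction.homEquiv_unit]
  invFun := (adj.homEquiv A Y).symm
  left_inv := (adj.homEquiv A Y).left_inv
  right_inv := (adj.homEquiv A Y).right_inv


/-- The hom-equivalence exhibiting `ST.inv ⋙ F ⋙ SS.Ser` as right adjoint to `G`. -/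
def PhiLE (Y : S) (X : T) :
    (G.obj Y ⟶ X) ≃ₗ[K] (Y ⟶ SS.Ser.obj (F.obj (ST.inv.obj X))) :=
  homPostEquiv (G.obj Y) (ST.unitIso.app X) ≪≫ₗ
  ST.φ (G.obj Y) (ST.Ser.obj (ST.inv.obj X)) ≪≫ₗ
  (mapLE ST.Ser ST.serAdditive ST.serLinear ST.ffSer (ST.inv.obj X) (G.obj Y)).dualMap ≪≫ₗ
  (adjLE F G adj (ST.inv.obj X) Y).dualMap ≪≫ₗ
  ((mapLE SS.Ser SS.serAdditive SS.serLinear SS.ffSer (F.obj (ST.inv.obj X)) Y).symm).dualMap ≪≫ₗ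
  (SS.φ Y (SS.Ser.obj (F.obj (ST.inv.obj X)))).symm

lemma PhiLE_spec (Y : S) (X : T) (f : G.obj Y ⟶ X) (h₀ : F.obj (ST.inv.obj X) ⟶ Y) :
    SS.φ Y (SS.Ser.obj (F.obj (ST.inv.obj X))) (PhiLE ST SS F G adj Y X f) (SS.Ser.map h₀)
      = ST.φ (G.obj Y) (ST.Ser.obj (ST.inv.obj X)) (f ≫ ST.unitIso.hom.app X)
          (ST.Ser.map (adj.homEquiv (ST.inv.obj X) Y h₀)) := by
  simp [PhiLE, homPostEquiv, mapLE, adjLE, LinearEquiv.dualMap_apply]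

lemma PhiLE_nat_right (Y : S) {X X' : T} (f : G.obj Y ⟶ X) (g : X ⟶ X') :
    PhiLE ST SS F G adj Y X' (f ≫ g)
      = PhiLE ST SS F G adj Y X f ≫ SS.Ser.map (F.map (ST.inv.map g)) := by
  apply (SS.φ Y (SS.Ser.obj (F.obj (ST.inv.obj X')))).injective
  apply LinearMap.ext
  intro h
  obtain ⟨h₀, rfl⟩ := SS.ffSer.map_surjective h
  rw [SS.nat_right, ← SS.Ser.map_comp, PhiLE_spec, PhiLE_spec,
    Adjunction.homEquiv_naturality_left]
  have hu : f ≫ g ≫ ST.unitIso.hom.app X'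
      = (f ≫ ST.unitIso.hom.app X) ≫ ST.Ser.map (ST.inv.map g) := by
    have := ST.unitIso.hom.naturality g
    simp only [Functor.id_map, Functor.comp_map] at this
    rw [Category.assoc, ← this]
  rw [Category.assoc, hu, ST.nat_right, ST.Ser.map_comp]
  rfl

lemma PhiLE_nat_left {Y' Y : S} (f : Y' ⟶ Y) (X : T) (k : G.obj Y ⟶ X) :
    PhiLE ST SS F G adj Y' X (G.map f ≫ k) = f ≫ PhiLE ST SS F G adj Y X k := by
  apply (SS.φ Y' (SS.Ser.obj (F.obj (ST.inv.obj X)))).injective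
  apply LinearMap.ext
  intro h
  obtain ⟨h₀, rfl⟩ := SS.ffSer.map_surjective h
  rw [SS.nat_left, ← SS.Ser.map_comp, PhiLE_spec, PhiLE_spec, Category.assoc,
    ST.nat_left, ← ST.Ser.map_comp, Adjunction.homEquiv_naturality_right]

/-- The hom-equivalence exhibiting `SS.Ser ⋙ G ⋙ ST.inv` as left adjoint to `F`. -/
def PsiLE (Y : S) (X : T) :
    (ST.inv.obj (G.obj (SS.Ser.obj Y)) ⟶ X) ≃ₗ[K] (Y ⟶ F.obj X) :=
  ST.φ (ST.inv.obj (G.obj (SS.Ser.obj Y))) X ≪≫ₗ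
  (homPostEquiv X (ST.unitIso.app (G.obj (SS.Ser.obj Y)))).dualMap ≪≫ₗ
  (adjLE F G adj X (SS.Ser.obj Y)).dualMap ≪≫ₗ
  (SS.φ Y (F.obj X)).symm

lemma PsiLE_spec (Y : S) (X : T) (f : ST.inv.obj (G.obj (SS.Ser.obj Y)) ⟶ X)
    (h : F.obj X ⟶ SS.Ser.obj Y) :
    SS.φ Y (F.obj X) (PsiLE ST SS F G adj Y X f) h
      = ST.φ (ST.inv.obj (G.obj (SS.Ser.obj Y))) X f
          (adj.homEquiv X (SS.Ser.obj Y) h ≫ ST.unitIso.hom.app (G.obj (SS.Ser.obj Y))) := by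
  simp [PsiLE, homPostEquiv, adjLE, LinearEquiv.dualMap_apply]

lemma PsiLE_nat_right (Y : S) {X X' : T} (f : ST.inv.obj (G.obj (SS.Ser.obj Y)) ⟶ X)
    (g : X ⟶ X') :
    PsiLE ST SS F G adj Y X' (f ≫ g) = PsiLE ST SS F G adj Y X f ≫ F.map g := by
  apply (SS.φ Y (F.obj X')).injective
  apply LinearMap.ext
  intro h
  rw [SS.nat_right, PsiLE_spec, PsiLE_spec, ST.nat_right,
    Adjunction.homEquiv_naturality_left, Category.assoc]

lemma PsiLE_nat_left {Y' Y : S} (f : Y' ⟶ Y) (X : T)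
    (k : ST.inv.obj (G.obj (SS.Ser.obj Y)) ⟶ X) :
    PsiLE ST SS F G adj Y' X (ST.inv.map (G.map (SS.Ser.map f)) ≫ k)
      = f ≫ PsiLE ST SS F G adj Y X k := by
  apply (SS.φ Y' (F.obj X)).injective
  apply LinearMap.ext
  intro h
  rw [SS.nat_left, PsiLE_spec, PsiLE_spec, ST.nat_left,
    Adjunction.homEquiv_naturality_right]
  congr 1
  have hu : ST.unitIso.hom.app (G.obj (SS.Ser.obj Y')) ≫ ST.Ser.map (ST.inv.map (G.map (SS.Ser.map f)))
      = G.map (SS.Ser.map f) ≫ ST.unitIso.hom.app (G.obj (SS.Ser.obj Y)) := by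
    have := ST.unitIso.hom.naturality (G.map (SS.Ser.map f))
    simp only [Functor.id_map, Functor.comp_map] at this
    rw [← this]
  rw [Category.assoc, hu, ← Category.assoc]

/-- The first adjunction. -/
def adjPhi : G ⊣ ST.inv ⋙ F ⋙ SS.Ser :=
  Adjunction.mkOfHomEquiv
    { homEquiv := fun Y X => (PhiLE ST SS F G adj Y X).toEquiv
      homEquiv_naturality_left_symm := by
        intro Y' Y X f g
        have h1 := PhiLE_nat_left ST SS F G adj f X ((PhiLE ST SS F G adj Y X).symm g)
        rw [LinearEquiv.apply_symm_apply] at h1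
        apply (PhiLE ST SS F G adj Y' X).toEquiv.injective
        exact ((PhiLE ST SS F G adj Y' X).toEquiv.apply_symm_apply (f ≫ g)).trans h1.symm
      homEquiv_naturality_right := by
        intro Y X X' f g
        exact PhiLE_nat_right ST SS F G adj Y f g }

/-- The second adjunction. -/
def adjPsi : (SS.Ser ⋙ G ⋙ ST.inv) ⊣ F :=
  Adjunction.mkOfHomEquiv
    { homEquiv := fun Y X => (PsiLE ST SS F G adj Y X).toEquiv
      homEquiv_naturality_left_symm := by
        intro Y' Y X f g
        have h1 := PsiLE_nat_left ST SS F G adj f X ((PsiLE ST SS F G adj Y X).symm g)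
        rw [LinearEquiv.apply_symm_apply] at h1
        apply (PsiLE ST SS F G adj Y' X).toEquiv.injective
        exact ((PsiLE ST SS F G adj Y' X).toEquiv.apply_symm_apply (f ≫ g)).trans h1.symm
      homEquiv_naturality_right := by
        intro Y X X' f g
        exact PsiLE_nat_right ST SS F G adj Y f g }

end Helpers


/-- if `T` and `S` are `K`-linear triangulated categories with
Serre functors `S_T`, `S_S` and `F : T ⇄ S : G` is an adjoint pair of `K`-linear
triangulated functors, then `G` has a right adjoint, namely
`S_S ∘ F ∘ S_T⁻¹`, and dually `F` has a left adjoint, namely `S_T⁻¹ ∘ G ∘ S_S`. -/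
theorem serreFunctor_adjoints
    {K : Type*} [Field K]
    {T : Type u} [Category.{v} T] [Preadditive T] [Linear K T] [HasZeroObject T]
    [HasShift T ℤ] [∀ n : ℤ, (shiftFunctor T n).Additive] [Pretriangulated T]
    {S : Type u} [Category.{v} S] [Preadditive S] [Linear K S] [HasZeroObject S]
    [HasShift S ℤ] [∀ n : ℤ, (shiftFunctor S n).Additive] [Pretriangulated S]
    (ST : SerreFunctor K T) (SS : SerreFunctor K S)
    (F : T ⥤ S) (G : S ⥤ T) (adj : F ⊣ G)
    [F.Additive] [F.Linear K] [F.CommShift ℤ] [F.IsTriangulated]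
    [G.Additive] [G.Linear K] [G.CommShift ℤ] [G.IsTriangulated] :
    Nonempty (G ⊣ ST.inv ⋙ F ⋙ SS.Ser) ∧
    Nonempty ((SS.Ser ⋙ G ⋙ ST.inv) ⊣ F) :=
  ⟨⟨adjPhi ST SS F G adj⟩, ⟨adjPsi ST SS F G adj⟩⟩
end

section
/- Let T be a triangulated category with a metric {B_n}, and define the improvement {C_n} by C_1 := B_1 and C_n := B_n ∩ ΣC_{n-1} ∩ Σ^{-1}C_{n-1} for n > 1. Then {C_n} is a good metric on T. -/
open CategoryTheory Limits Pretriangulated ZeroObject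

universe v u

section Defs

variable {C : Type u} [Category.{v} C] [Preadditive C] [HasZeroObject C]
  [HasShift C ℤ] [∀ n : ℤ, (shiftFunctor C n).Additive] [Pretriangulated C]

/-- A metric on a triangulated category: a non-increasing chain of full
(iso-closed) subcategories containing `0` and closed under extensions. -/
structure IsMetric (B : ℕ → Set C) : Prop where
  antitone : ∀ n : ℕ, B (n + 1) ⊆ B n
  zero_mem : ∀ n : ℕ, (0 : C) ∈ B n
  iso_closed : ∀ n : ℕ, ∀ ⦃X Y : C⦄, (X ≅ Y) → X ∈ B n → Y ∈ B n
  ext_closed : ∀ n : ℕ, ∀ T : Triangle C, T ∈ (distTriang C) →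
    T.obj₁ ∈ B n → T.obj₃ ∈ B n → T.obj₂ ∈ B n

/-- The rapid decrease condition: `Σ⁻¹B_{n+1} ∪ B_{n+1} ∪ ΣB_{n+1} ⊆ B_n`. -/
def IsGoodMetric (B : ℕ → Set C) : Prop :=
  ∀ n : ℕ, ∀ X ∈ B (n + 1),
    X ∈ B n ∧ X⟦(1 : ℤ)⟧ ∈ B n ∧ X⟦(-1 : ℤ)⟧ ∈ B n

/-- The improvement of a metric `{B n}`: `C 0 = B 0` and
`C (n+1) = B (n+1) ∩ Σ C n ∩ Σ⁻¹ C n`. -/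
def improv (B : ℕ → Set C) : ℕ → Set C
  | 0 => B 0
  | n + 1 => B (n + 1) ∩ {X : C | X⟦(-1 : ℤ)⟧ ∈ improv B n}
      ∩ {X : C | X⟦(1 : ℤ)⟧ ∈ improv B n}

lemma improv_antitone (B : ℕ → Set C) (hB : IsMetric B) :
    ∀ n : ℕ, improv B (n + 1) ⊆ improv B n := by
  intro n
  induction n with
  | zero => rintro X ⟨⟨h1, _⟩, _⟩; exact hB.antitone 0 h1
  | succ n ih =>
    rintro X ⟨⟨h1, h2⟩, h3⟩
    exact ⟨⟨hB.antitone _ h1, ih h2⟩, ih h3⟩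

lemma improv_iso_closed (B : ℕ → Set C) (hB : IsMetric B) :
    ∀ n : ℕ, ∀ ⦃X Y : C⦄, (X ≅ Y) → X ∈ improv B n → Y ∈ improv B n := by
  intro n
  induction n with
  | zero => exact hB.iso_closed 0
  | succ n ih =>
    rintro X Y e ⟨⟨h1, h2⟩, h3⟩
    exact ⟨⟨hB.iso_closed _ e h1, ih ((shiftFunctor C (-1 : ℤ)).mapIso e) h2⟩,
      ih ((shiftFunctor C (1 : ℤ)).mapIso e) h3⟩

lemma improv_zero_mem (B : ℕ → Set C) (hB : IsMetric B) :
    ∀ n : ℕ, (0 : C) ∈ improv B n := by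
  intro n
  induction n with
  | zero => exact hB.zero_mem 0
  | succ n ih =>
    have hz : ∀ k : ℤ, IsZero ((0 : C)⟦k⟧) :=
      fun k => (shiftFunctor C k).map_isZero (isZero_zero C)
    exact ⟨⟨hB.zero_mem _, improv_iso_closed B hB n ((hz (-1)).isoZero).symm ih⟩,
      improv_iso_closed B hB n ((hz 1).isoZero).symm ih⟩

lemma improv_ext_closed (B : ℕ → Set C) (hB : IsMetric B) :
    ∀ n : ℕ, ∀ T : Triangle C, T ∈ (distTriang C) →
      T.obj₁ ∈ improv B n → T.obj₃ ∈ improv B n → T.obj₂ ∈ improv B n := by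
  intro n
  induction n with
  | zero => exact hB.ext_closed 0
  | succ n ih =>
    rintro T hT ⟨⟨a1, a2⟩, a3⟩ ⟨⟨b1, b2⟩, b3⟩
    have h2 := ih _ (Triangle.shift_distinguished T hT (-1)) a2 b2
    have h3 := ih _ (Triangle.shift_distinguished T hT 1) a3 b3
    exact ⟨⟨hB.ext_closed _ T hT a1 b1, h2⟩, h3⟩

/-- the improvement of a metric is a good metric. -/
theorem improv_isGoodMetric (B : ℕ → Set C) (hB : IsMetric B) :
    IsMetric (improv B) ∧ IsGoodMetric (improv B) := by
  refine ⟨⟨improv_antitone B hB, improv_zero_mem B hB, improv_iso_closed B hB,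
    improv_ext_closed B hB⟩, ?_⟩
  rintro n X hX
  exact ⟨improv_antitone B hB n hX, hX.2, hX.1.2⟩

end Defs
end

section
/- Let T be a triangulated category with metric {B_n} and improvement {C_n}. For a directed diagram E_* in T, the following are equivalent: (i) E_* is a good Cauchy sequence with respect to {B_n}; (ii) E_* is a good Cauchy sequence with respect to {C_n}; (iii) E_* is a Cauchy sequence with respect to {C_n}. -/
open CategoryTheory Limits Pretriangulated ZeroObject

universe v u

section Defs

variable {C : Type u} [Category.{v} C] [Preadditive C] [HasZeroObject C]
  [HasShift C ℤ] [∀ n : ℤ, (shiftFunctor C n).Additive] [Pretriangulated C]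

/-- `coneIn B f`: some cone of `f` lies in `B`. -/
def coneIn (B : Set C) {X Y : C} (f : X ⟶ Y) : Prop :=
  ∃ (Z : C) (g : Y ⟶ Z) (h : Z ⟶ X⟦(1 : ℤ)⟧),
    Triangle.mk f g h ∈ (distTriang C) ∧ Z ∈ B

/-- `coneShiftIn B j f`: some cone `Z` of `f` satisfies `Z⟦j⟧ ∈ B`. -/
def coneShiftIn (B : Set C) (j : ℤ) {X Y : C} (f : X ⟶ Y) : Prop :=
  ∃ (Z : C) (g : Y ⟶ Z) (h : Z ⟶ X⟦(1 : ℤ)⟧),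
    Triangle.mk f g h ∈ (distTriang C) ∧ Z⟦j⟧ ∈ B

/-- A Cauchy sequence with respect to the metric `B`. -/
def IsCauchy (B : ℕ → Set C) (E : ℕ ⥤ C) : Prop :=
  ∀ i : ℕ, ∃ M : ℕ, ∀ (m m' : ℕ) (h : m ≤ m'), M ≤ m →
    coneIn (B i) (E.map (homOfLE h))

/-- A good Cauchy sequence with respect to the metric `B`. -/
def IsGoodCauchy (B : ℕ → Set C) (E : ℕ ⥤ C) : Prop :=
  ∀ (i : ℕ) (j : ℤ), ∃ M : ℕ, ∀ (m m' : ℕ) (h : m ≤ m'), M ≤ m →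
    coneShiftIn (B i) j (E.map (homOfLE h))

lemma improv_subset (B : ℕ → Set C) : ∀ n : ℕ, improv B n ⊆ B n := by
  rintro (_ | n) X hX
  · exact hX
  · exact hX.1.1

lemma improv_shift_pos (B : ℕ → Set C) (hB : IsMetric B) (n : ℕ) :
    ∀ (k : ℕ) (X : C), X ∈ improv B (n + k) → X⟦(k : ℤ)⟧ ∈ improv B n := by
  intro k
  induction k with
  | zero =>
    intro X hX
    exact improv_iso_closed B hB n ((shiftFunctorZero C ℤ).symm.app X) hX
  | succ k ih =>
    intro X hX
    have h1 : X⟦(1 : ℤ)⟧ ∈ improv B (n + k) := hX.2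
    have h2 := ih _ h1
    exact improv_iso_closed B hB n
      (((shiftFunctorAdd' C (1 : ℤ) (k : ℤ) ((k + 1 : ℕ) : ℤ) (by push_cast; ring)).app X).symm) h2

lemma improv_shift_neg (B : ℕ → Set C) (hB : IsMetric B) (n : ℕ) :
    ∀ (k : ℕ) (X : C), X ∈ improv B (n + k) → X⟦(-(k : ℤ))⟧ ∈ improv B n := by
  intro k
  induction k with
  | zero =>
    intro X hX
    exact improv_iso_closed B hB n ((shiftFunctorZero C ℤ).symm.app X) hX
  | succ k ih =>
    intro X hX
    have h1 : X⟦(-1 : ℤ)⟧ ∈ improv B (n + k) := hX.1.2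
    have h2 := ih _ h1
    exact improv_iso_closed B hB n
      (((shiftFunctorAdd' C (-1 : ℤ) (-(k : ℤ)) (-((k + 1 : ℕ) : ℤ)) (by push_cast; ring)).app X).symm) h2

/-- transfer membership of a shifted cone to any other cone of the same map. -/
lemma cone_transfer {S : Set C} (hS : ∀ ⦃X Y : C⦄, (X ≅ Y) → X ∈ S → Y ∈ S)
    {X Y : C} {f : X ⟶ Y} (Z : C) (g : Y ⟶ Z) (h : Z ⟶ X⟦(1 : ℤ)⟧)
    (hT : Triangle.mk f g h ∈ distTriang C) {j : ℤ} (hc : coneShiftIn S j f) :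
    Z⟦j⟧ ∈ S := by
  obtain ⟨Z', g', h', hT', hZ'⟩ := hc
  have e : Triangle.mk f g' h' ≅ Triangle.mk f g h :=
    isoTriangleOfIso₁₂ _ _ hT' hT (Iso.refl _) (Iso.refl _) (by exact (Category.comp_id f).trans (Category.id_comp f).symm)
  exact hS ((shiftFunctor C j).mapIso (Triangle.π₃.mapIso e)) hZ'

/-- for a directed diagram `E`, the following are equivalent:
(i) `E` is good Cauchy with respect to `{B n}`; (ii) `E` is good Cauchy with
respect to the improvement of `{B n}`; (iii) `E` is Cauchy with respect to the
improvement of `{B n}`. -/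
theorem goodCauchy_iff_cauchy_improv (B : ℕ → Set C) (hB : IsMetric B)
    (E : ℕ ⥤ C) :
    (IsGoodCauchy B E ↔ IsGoodCauchy (improv B) E) ∧
    (IsGoodCauchy (improv B) E ↔ IsCauchy (improv B) E) := by
  constructor
  · constructor
    · -- (i) → (ii)
      intro h i
      induction i with
      | zero => exact h 0
      | succ i ih =>
        intro j
        obtain ⟨M₀, h₀⟩ := h (i + 1) j
        obtain ⟨M₁, h₁⟩ := ih (j - 1)
        obtain ⟨M₂, h₂⟩ := ih (j + 1)
        refine ⟨max M₀ (max M₁ M₂), fun m m' hmm hMm => ?_⟩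
        obtain ⟨Z, g, hh, hT, hZ⟩ := h₀ m m' hmm (le_trans (le_max_left _ _) hMm)
        have hic := improv_iso_closed B hB i
        have hZ₁ : Z⟦j - 1⟧ ∈ improv B i :=
          cone_transfer hic Z g hh hT
            (h₁ m m' hmm (le_trans (le_trans (le_max_left _ _) (le_max_right _ _)) hMm))
        have hZ₂ : Z⟦j + 1⟧ ∈ improv B i :=
          cone_transfer hic Z g hh hT
            (h₂ m m' hmm (le_trans (le_trans (le_max_right _ _) (le_max_right _ _)) hMm))
        refine ⟨Z, g, hh, hT, ⟨⟨hZ, ?_⟩, ?_⟩⟩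
        · exact hic ((shiftFunctorAdd' C j (-1 : ℤ) (j - 1) (by ring)).app Z) hZ₁
        · exact hic ((shiftFunctorAdd' C j (1 : ℤ) (j + 1) (by ring)).app Z) hZ₂
    · -- (ii) → (i)
      intro h i j
      obtain ⟨M, hM⟩ := h i j
      refine ⟨M, fun m m' hmm hMm => ?_⟩
      obtain ⟨Z, g, hh, hT, hZ⟩ := hM m m' hmm hMm
      exact ⟨Z, g, hh, hT, improv_subset B i hZ⟩
  · constructor
    · -- (ii) → (iii)
      intro h i
      obtain ⟨M, hM⟩ := h i 0
      refine ⟨M, fun m m' hmm hMm => ?_⟩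
      obtain ⟨Z, g, hh, hT, hZ⟩ := hM m m' hmm hMm
      exact ⟨Z, g, hh, hT, improv_iso_closed B hB i ((shiftFunctorZero C ℤ).app Z) hZ⟩
    · -- (iii) → (ii)
      intro h i j
      obtain ⟨M, hM⟩ := h (i + j.natAbs)
      refine ⟨M, fun m m' hmm hMm => ?_⟩
      obtain ⟨Z, g, hh, hT, hZ⟩ := hM m m' hmm hMm
      refine ⟨Z, g, hh, hT, ?_⟩
      rcases Int.natAbs_eq j with hj | hj
      · rw [hj]; exact improv_shift_pos B hB i j.natAbs Z hZ
      · rw [hj]; exact improv_shift_neg B hB i j.natAbs Z hZ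


end Defs
end

section
/- Let T be a triangulated category with metric {B_n} and let E_* = (E_1 → E_2 → ...) be a good Cauchy sequence whose module colimit colim Y(E_*) is zero in Mod-T. Then for every i ∈ ℕ and j ∈ ℤ there exists M ∈ ℕ such that for all m ≥ M the shifted object Σ^j E_m is a direct summand of an object of B_i. -/
open CategoryTheory Limits Pretriangulated ZeroObject

universe v u

section Defs

variable {C : Type u} [Category.{v} C] [Preadditive C] [HasZeroObject C]
  [HasShift C ℤ] [∀ n : ℤ, (shiftFunctor C n).Additive] [Pretriangulated C]

lemma aux_exists_zero_map {C : Type u} [Category.{v} C] [Preadditive C] (E : ℕ ⥤ C)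
    (hzero : IsZero (colimit (E ⋙ preadditiveYoneda.{v})))
    (m : ℕ) : ∃ (n : ℕ) (h : m ≤ n), E.map (homOfLE h) = 0 := by
  set G := E ⋙ preadditiveYoneda ⋙ (evaluation Cᵒᵖ AddCommGrpCat).obj (Opposite.op (E.obj m)) with hG
  have hGz : IsZero (colimit G) := by
    refine IsZero.of_iso ?_ (colimitObjIsoColimitCompEvaluation (E ⋙ preadditiveYoneda.{v}) (Opposite.op (E.obj m))).symm
    exact (Functor.isZero_iff _).1 hzero _
  have key : ∀ a : (colimit G : AddCommGrpCat), a = 0 := by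
    intro a
    have h1 : (𝟙 (colimit G)) = 0 := hGz.eq_of_src _ _
    calc a = (𝟙 (colimit G)) a := rfl
    _ = ((0 : colimit G ⟶ colimit G) : _ → _) a := by rw [h1]
    _ = 0 := by simp
  haveI : PreservesFilteredColimitsOfSize.{0,0} (forget AddCommGrpCat.{v}) :=
    preservesFilteredColimitsOfSize_of_univLE.{v,v,0,0} _
  have := Concrete.colimit_exists_of_rep_eq (C := AddCommGrpCat) G
    (i := m) (j := m) (𝟙 (E.obj m) : G.obj m) (0 : G.obj m)
    ((key _).trans (key _).symm)
  obtain ⟨k, f, g, hfg⟩ := this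
  refine ⟨k, leOfHom f, ?_⟩
  have h2 : G.map f (𝟙 (E.obj m)) = E.map f := by
    show 𝟙 (E.obj m) ≫ E.map f = E.map f
    simp
  have h3 : G.map g (0 : G.obj m) = 0 := (G.map g).hom.map_zero
  have hf : f = homOfLE (leOfHom f) := rfl
  rw [← hf, ← h2, hfg, h3]
  rfl

/-- if the module colimit of a good Cauchy sequence `E` is zero
in `Mod-C`, then for every `i` and `j ∈ ℤ` the objects `Σ^j (E m)` are
eventually direct summands of objects of `B i`. -/
theorem summand_of_moduleColimit_isZero [HasBinaryBiproducts C]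
    (B : ℕ → Set C) (hB : IsMetric B)
    (E : ℕ ⥤ C) (hE : IsGoodCauchy B E)
    (hzero : IsZero (colimit (E ⋙ preadditiveYoneda.{v}))) :
    ∀ (i : ℕ) (j : ℤ), ∃ M : ℕ, ∀ m : ℕ, M ≤ m →
      ∃ Y : C, ∃ Z ∈ B i, Nonempty (((E.obj m)⟦j⟧ ⊞ Y) ≅ Z) := by
  intro i j
  obtain ⟨M, hM⟩ := hE i (j - 1)
  refine ⟨M, fun m hm => ?_⟩
  obtain ⟨n, hmn, hzero'⟩ := aux_exists_zero_map E hzero m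
  obtain ⟨Z, g, h, hT, hZ⟩ := hM m n hmn hm
  rw [hzero'] at hT
  have hrot := rot_of_distTriang _ hT
  have hmor₃ : (Triangle.mk (0 : E.obj m ⟶ E.obj n) g h).rotate.mor₃ = 0 := by
    simp [Triangle.rotate]
    exact neg_eq_zero.mpr ((shiftFunctor C 1).map_zero _ _)
  obtain ⟨e, -, -⟩ := exists_iso_binaryBiproduct_of_distTriang _ hrot hmor₃
  haveI : PreservesBinaryBiproducts (shiftFunctor C (j-1 : ℤ)) :=
    preservesBinaryBiproducts_of_preservesBiproducts _
  refine ⟨(E.obj n)⟦(j - 1 : ℤ)⟧, Z⟦(j - 1 : ℤ)⟧, hZ, ⟨?_⟩⟩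
  calc (E.obj m)⟦j⟧ ⊞ (E.obj n)⟦(j-1 : ℤ)⟧
      ≅ ((E.obj m)⟦(1 : ℤ)⟧)⟦(j-1 : ℤ)⟧ ⊞ (E.obj n)⟦(j-1 : ℤ)⟧ :=
        biprod.mapIso ((shiftFunctorAdd' C 1 (j-1) j (by ring)).app (E.obj m)) (Iso.refl _)
    _ ≅ (E.obj n)⟦(j-1 : ℤ)⟧ ⊞ ((E.obj m)⟦(1 : ℤ)⟧)⟦(j-1 : ℤ)⟧ := biprod.braiding _ _
    _ ≅ (E.obj n ⊞ (E.obj m)⟦(1 : ℤ)⟧)⟦(j-1 : ℤ)⟧ :=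
        ((shiftFunctor C (j-1 : ℤ)).mapBiprod _ _).symm
    _ ≅ Z⟦(j-1 : ℤ)⟧ := (shiftFunctor C (j-1 : ℤ)).mapIso e.symm


end Defs
end

section
/- Let T be a triangulated category with metric {B_n} and let E_* be a good Cauchy sequence such that E := colim Y(E_*) is weakly compactly supported, i.e. E ∈ Y(B_i)^⊥ for some i. Then the following are equivalent: (i) E ≅ 0; (ii) for every i and every j ∈ ℤ there is M such that Σ^j E_m ∈ Summ(B_i) for all m ≥ M; (iii) for every i there is M such that E_m ∈ Summ(B_i) for all m ≥ M. -/
open CategoryTheory Limits Pretriangulated ZeroObject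

universe v u

section Defs

variable {C : Type u} [Category.{v} C] [Preadditive C] [HasZeroObject C]
  [HasShift C ℤ] [∀ n : ℤ, (shiftFunctor C n).Additive] [Pretriangulated C]

set_option linter.unusedSectionVars false

lemma aux_cone_zero {X Y Z : C} (g : Y ⟶ Z) (h : Z ⟶ X⟦(1:ℤ)⟧)
    (hT : Triangle.mk (0 : X ⟶ Y) g h ∈ distTriang C) :
    Nonempty (Z ≅ Y ⊞ X⟦(1:ℤ)⟧) := by
  obtain ⟨e, -, -⟩ := exists_iso_binaryBiproduct_of_distTriang _
    (rot_of_distTriang _ hT) (by simp [Triangle.rotate]; exact neg_eq_zero.mpr ((shiftFunctor C (1:ℤ)).map_zero _ _))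
  exact ⟨e⟩

lemma aux_eventually_zero (E : ℕ ⥤ C)
    (hz : IsZero (colimit (E ⋙ preadditiveYoneda.{v}))) (m : ℕ) :
    ∃ m' : ℕ, ∃ h : m ≤ m', E.map (homOfLE h) = 0 := by
  set G := E ⋙ preadditiveYoneda.{v} with hG
  set c := Opposite.op (E.obj m) with hc
  have h1 : IsZero ((colimit G).obj c) := ((colimit G).isZero_iff).mp hz c
  set F := G ⋙ (evaluation Cᵒᵖ AddCommGrpCat.{v}).obj c with hF
  have h2 : IsZero (colimit F) :=
    (colimitObjIsoColimitCompEvaluation G c).isZero_iff.mp h1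
  have hid : (𝟙 (colimit F) : _) = 0 := by rwa [← IsZero.iff_id_eq_zero]
  have hsub : ∀ x y : (colimit F : AddCommGrpCat.{v}), x = y := by
    intro x y
    calc x = (𝟙 (colimit F)) x := rfl
      _ = (0 : colimit F ⟶ colimit F) x := by rw [hid]
      _ = (0 : colimit F ⟶ colimit F) y := rfl
      _ = (𝟙 (colimit F)) y := by rw [hid]
      _ = y := rfl
  letI : PreservesFilteredColimitsOfSize.{0,0} (forget AddCommGrpCat.{v}) :=
    preservesSmallestFilteredColimits_of_preservesFilteredColimits _
  obtain ⟨k, f, g, hfg⟩ := Concrete.colimit_exists_of_rep_eq F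
    (𝟙 (E.obj m) : (E.obj m ⟶ E.obj m)) (0 : E.obj m ⟶ E.obj m) (hsub _ _)
  refine ⟨k, leOfHom f, ?_⟩
  have h3 : F.map g (0 : E.obj m ⟶ E.obj m) = 0 := map_zero _
  have h4 : F.map f (𝟙 (E.obj m)) = E.map f := by
    show 𝟙 (E.obj m) ≫ E.map f = E.map f
    simp
  rw [h3, h4] at hfg
  rwa [show homOfLE (leOfHom f) = f from Subsingleton.elim _ _]

/-- let `E` be a good Cauchy sequence whose module colimit is
weakly compactly supported (i.e. lies in `Y(B i)^⊥` for some `i`).  Then the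
following are equivalent: (i) the module colimit is zero; (ii) for every `i`
and `j ∈ ℤ`, eventually `Σ^j (E m) ∈ Summ (B i)`; (iii) for every `i`,
eventually `E m ∈ Summ (B i)`. -/
theorem moduleColimit_isZero_tfae [HasBinaryBiproducts C]
    (B : ℕ → Set C) (hB : IsMetric B)
    (E : ℕ ⥤ C) (hE : IsGoodCauchy B E)
    (hwc : ∃ i : ℕ, ∀ X ∈ B i,
      ∀ f : preadditiveYoneda.obj X ⟶ colimit (E ⋙ preadditiveYoneda.{v}), f = 0) :
    (IsZero (colimit (E ⋙ preadditiveYoneda.{v})) ↔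
      (∀ (i : ℕ) (j : ℤ), ∃ M : ℕ, ∀ m : ℕ, M ≤ m →
        ∃ Y : C, ∃ Z ∈ B i, Nonempty (((E.obj m)⟦j⟧ ⊞ Y) ≅ Z))) ∧
    ((∀ (i : ℕ) (j : ℤ), ∃ M : ℕ, ∀ m : ℕ, M ≤ m →
        ∃ Y : C, ∃ Z ∈ B i, Nonempty (((E.obj m)⟦j⟧ ⊞ Y) ≅ Z)) ↔
      (∀ i : ℕ, ∃ M : ℕ, ∀ m : ℕ, M ≤ m →
        ∃ Y : C, ∃ Z ∈ B i, Nonempty ((E.obj m ⊞ Y) ≅ Z))) := by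
  set G := E ⋙ preadditiveYoneda.{v} with hG
  -- (i) → (ii)
  have impA : IsZero (colimit G) →
      (∀ (i : ℕ) (j : ℤ), ∃ M : ℕ, ∀ m : ℕ, M ≤ m →
        ∃ Y : C, ∃ Z ∈ B i, Nonempty (((E.obj m)⟦j⟧ ⊞ Y) ≅ Z)) := by
    intro hz i j
    obtain ⟨M, hM⟩ := hE i j
    obtain ⟨m₁, hMm₁, hzero⟩ := aux_eventually_zero E hz M
    refine ⟨m₁, fun m hm => ?_⟩
    have hMm : M ≤ m := le_trans hMm₁ hm
    obtain ⟨Z, g, h', hdist, hZ⟩ := hM M m hMm le_rfl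
    have hmap : E.map (homOfLE hMm) = 0 := by
      rw [show homOfLE hMm = homOfLE hMm₁ ≫ homOfLE hm from Subsingleton.elim _ _,
        E.map_comp, hzero, zero_comp]
    rw [hmap] at hdist
    obtain ⟨e⟩ := aux_cone_zero g h' hdist
    letI := preservesBinaryBiproducts_of_preservesBinaryProducts (shiftFunctor C j)
    refine ⟨((E.obj M)⟦(1:ℤ)⟧)⟦j⟧, Z⟦j⟧, hZ,
      ⟨((shiftFunctor C j).mapBiprod (E.obj m) ((E.obj M)⟦(1:ℤ)⟧)).symm ≪≫
        (shiftFunctor C j).mapIso e.symm⟩⟩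
  -- (ii) → (iii)
  have impB : (∀ (i : ℕ) (j : ℤ), ∃ M : ℕ, ∀ m : ℕ, M ≤ m →
        ∃ Y : C, ∃ Z ∈ B i, Nonempty (((E.obj m)⟦j⟧ ⊞ Y) ≅ Z)) →
      (∀ i : ℕ, ∃ M : ℕ, ∀ m : ℕ, M ≤ m →
        ∃ Y : C, ∃ Z ∈ B i, Nonempty ((E.obj m ⊞ Y) ≅ Z)) := by
    intro h2 i
    obtain ⟨M, hM⟩ := h2 i 0
    refine ⟨M, fun m hm => ?_⟩
    obtain ⟨Y, Z, hZ, ⟨e⟩⟩ := hM m hm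
    exact ⟨Y, Z, hZ,
      ⟨biprod.mapIso ((shiftFunctorZero C ℤ).app (E.obj m)).symm (Iso.refl Y) ≪≫ e⟩⟩
  -- (iii) → (i)
  have impC : (∀ i : ℕ, ∃ M : ℕ, ∀ m : ℕ, M ≤ m →
        ∃ Y : C, ∃ Z ∈ B i, Nonempty ((E.obj m ⊞ Y) ≅ Z)) →
      IsZero (colimit G) := by
    intro h3
    obtain ⟨i, hi⟩ := hwc
    obtain ⟨M, hM⟩ := h3 i
    have key : ∀ m : ℕ, M ≤ m → colimit.ι G m = 0 := by
      intro m hm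
      obtain ⟨Y, Z, hZ, ⟨e⟩⟩ := hM m hm
      have hsr : (biprod.inl ≫ e.hom) ≫ (e.inv ≫ biprod.fst) = 𝟙 (E.obj m) := by simp
      have : colimit.ι G m =
          preadditiveYoneda.map (biprod.inl ≫ e.hom) ≫
            (preadditiveYoneda.map (e.inv ≫ biprod.fst) ≫ colimit.ι G m) := by
        rw [← Category.assoc, ← Functor.map_comp, hsr, CategoryTheory.Functor.map_id]
        exact (Category.id_comp _).symm
      rw [this, hi Z hZ (preadditiveYoneda.map (e.inv ≫ biprod.fst) ≫ colimit.ι G m),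
        comp_zero]
    have hι : ∀ m : ℕ, colimit.ι G m = 0 := by
      intro m
      rcases le_total M m with h | h
      · exact key m h
      · rw [← colimit.w G (homOfLE h), key M le_rfl, comp_zero]
    rw [IsZero.iff_id_eq_zero]
    apply colimit.hom_ext
    intro j
    rw [Category.comp_id, comp_zero, hι j]
  exact ⟨⟨impA, fun h2 => impC (impB h2)⟩, ⟨impB, fun h3 => impA (impC h3)⟩⟩


end Defs
end
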